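/- arXiv:1705.02821 — 2 statements merged into one kernel-verified Lean document; each statement's English description precedes it below -/
import Mathlib

section
/- For any vector p ∈ ℝ³ with hat(p) the skew-symmetric matrix satisfying hat(p)v = p × v, and θ = ‖p‖ ≠ 0, the matrix exp(hat(p)) equals I + (sin θ / θ)·hat(p) + ((1 − cos θ)/θ²)·hat(p)², i.e., Rodrigues' formula holds for the matrix exponential of a skew-symmetric 3×3 matrix. -/
open Matrix Real

/-- The skew-symmetric "hat" matrix of `p ∈ ℝ³`, satisfying `hat p *ᵥ v = p × v`. -/
def hat (p : Fin 3 → ℝ) : Matrix (Fin 3) (Fin 3) ℝ :=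
  !![0, -p 2, p 1; p 2, 0, -p 0; -p 1, p 0, 0]

/-- Euclidean norm on `ℝ³` (as `Fin 3 → ℝ`). -/
noncomputable def nrm (p : Fin 3 → ℝ) : ℝ := Real.sqrt (∑ i, (p i) ^ 2)

/-!
By Cayley–Hamilton, `X = hat p` satisfies `X ^ 3 = -θ ^ 2 • X` with `θ = ‖p‖`. Hence the odd powers
are `X ^ (2n+1) = (-θ²)ⁿ • X` and the positive even ones `X ^ (2n+2) = (-θ²)ⁿ • X ^ 2`, so the odd
part of the exponential series is the sine series at `θ` divided by `θ`, and the even part is `1`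
plus the series of `1 - cos θ` divided by `θ²`.
-/

open scoped Nat

section PowThree

variable {R A : Type*} [CommSemiring R] [Semiring A] [Algebra R A] {X : A} {c : R}

theorem pow_two_mul_add_one_of_pow_three_eq_smul (hX : X ^ 3 = c • X) (n : ℕ) :
    X ^ (2 * n + 1) = c ^ n • X := by
  induction n with
  | zero => simp
  | succ n ih =>
    rw [show 2 * (n + 1) + 1 = 2 * n + 1 + 2 by ring, pow_add, ih, smul_mul_assoc, ← pow_succ',
      hX, smul_smul, pow_succ]

theorem pow_two_mul_add_two_of_pow_three_eq_smul (hX : X ^ 3 = c • X) (n : ℕ) :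
    X ^ (2 * n + 2) = c ^ n • X ^ 2 := by
  rw [pow_succ, pow_two_mul_add_one_of_pow_three_eq_smul hX, smul_mul_assoc, ← sq]

end PowThree

section Exp

variable {A : Type*} [Ring A] [Algebra ℝ A] [TopologicalSpace A] [ContinuousSMul ℝ A] {X : A}
  {θ : ℝ}

theorem hasSum_odd_expSeries_of_pow_three_eq (hθ : θ ≠ 0) (hX : X ^ 3 = -θ ^ 2 • X) :
    HasSum (fun n ↦ ((2 * n + 1)! : ℝ)⁻¹ • X ^ (2 * n + 1)) ((sin θ / θ) • X) := by
  convert ((hasSum_sin θ).div_const θ).smul_const X using 2 with n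
  rw [pow_two_mul_add_one_of_pow_three_eq_smul hX, smul_smul, neg_pow, ← pow_mul, pow_succ]
  field_simp

theorem hasSum_even_expSeries_of_pow_three_eq [ContinuousAdd A] (hθ : θ ≠ 0)
    (hX : X ^ 3 = -θ ^ 2 • X) :
    HasSum (fun n ↦ ((2 * n)! : ℝ)⁻¹ • X ^ (2 * n)) (1 + ((1 - cos θ) / θ ^ 2) • X ^ 2) := by
  have hcos : HasSum (fun n : ℕ ↦ (-1) ^ (n + 1) * θ ^ (2 * (n + 1)) / (2 * (n + 1))!)
      (cos θ - 1) := by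
    simpa using (hasSum_nat_add_iff' 1).mpr (hasSum_cos θ)
  have hshift : HasSum (fun n ↦ ((2 * (n + 1))! : ℝ)⁻¹ • X ^ (2 * (n + 1)))
      (((1 - cos θ) / θ ^ 2) • X ^ 2) := by
    convert (hcos.neg.div_const (θ ^ 2)).smul_const (X ^ 2) using 2 with n
    · rw [mul_add_one, pow_two_mul_add_two_of_pow_three_eq_smul hX, smul_smul]
      congr 1
      rw [neg_pow, ← pow_mul]
      field_simp
      ring
    · ring
  simpa only [mul_zero, Nat.factorial_zero, Nat.cast_one, inv_one, pow_zero, one_smul] using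
    hshift.zero_add (f := fun n ↦ ((2 * n)! : ℝ)⁻¹ • X ^ (2 * n))

theorem exp_eq_of_pow_three_eq [IsTopologicalRing A] [T2Space A] (hθ : θ ≠ 0)
    (hX : X ^ 3 = -θ ^ 2 • X) :
    NormedSpace.exp X = 1 + (sin θ / θ) • X + ((1 - cos θ) / θ ^ 2) • X ^ 2 := by
  rw [NormedSpace.exp_eq_tsum ℝ, add_right_comm]
  exact (HasSum.even_add_odd (f := fun n ↦ (n ! : ℝ)⁻¹ • X ^ n)
    (hasSum_even_expSeries_of_pow_three_eq hθ hX)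
    (hasSum_odd_expSeries_of_pow_three_eq hθ hX)).tsum_eq

end Exp

theorem hat_pow_three (p : Fin 3 → ℝ) : hat p ^ 3 = -(∑ i, p i ^ 2) • hat p := by
  ext i j
  fin_cases i <;> fin_cases j <;>
    simp [hat, pow_succ, Matrix.mul_apply, Fin.sum_univ_three] <;> ring

theorem nrm_sq (p : Fin 3 → ℝ) : nrm p ^ 2 = ∑ i, p i ^ 2 :=
  sq_sqrt (by positivity)

theorem rodrigues_formula_general (p : Fin 3 → ℝ)
    (θ : ℝ) (hθ : θ = nrm p) (hne : θ ≠ 0) :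
    NormedSpace.exp (hat p)
      = (1 : Matrix (Fin 3) (Fin 3) ℝ) + (Real.sin θ / θ) • hat p
        + ((1 - Real.cos θ) / θ ^ 2) • (hat p * hat p) := by
  rw [← sq]
  refine exp_eq_of_pow_three_eq hne ?_
  rw [hat_pow_three, hθ, nrm_sq]

/-- Rodrigues' formula: for `p ≠ 0` with `θ = ‖p‖`,
`exp(hat p) = I + (sin θ / θ) hat p + ((1 - cos θ)/θ²) (hat p)²`. -/
theorem rodrigues_formula (p : Fin 3 → ℝ)
    (hhat : ∀ v : Fin 3 → ℝ, hat p *ᵥ v = ![p 1 * v 2 - p 2 * v 1, p 2 * v 0 - p 0 * v 2,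
      p 0 * v 1 - p 1 * v 0])
    (θ : ℝ) (hθ : θ = nrm p) (hne : θ ≠ 0) :
    NormedSpace.exp (hat p)
      = (1 : Matrix (Fin 3) (Fin 3) ℝ) + (Real.sin θ / θ) • hat p
        + ((1 - Real.cos θ) / θ ^ 2) • (hat p * hat p) :=
  rodrigues_formula_general p θ hθ hne
end

section
/- Consider two agents with dynamics ẋ₁ = L_{x₁}·(x₂−x₁)/‖x₂−x₁‖ and ẋ₂ = L_{x₂}·(x₁−x₂)/‖x₁−x₂‖ (defined when x₁ ≠ x₂), with ‖x₁(0)‖, ‖x₂(0)‖ ≤ C < π. Then along any solution, d/dt ‖x₂ − x₁‖² = −2(x₂−x₁)ᵀ(L_{x₁}+L_{x₂})(x₂−x₁)/‖x₂−x₁‖ ≤ −2c₁‖x₂−x₁‖ for some constant c₁ > 0 depending only on C, so the disagreement ‖x₂−x₁‖ decreases at rate at least c₁ while x₁ ≠ x₂. -/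
/-! The skew part `hat x / 2` of `L_x` does not contribute to the quadratic form `vᵀ L_x v`, and
`L¹_x = α I + (1 - α) x xᵀ / ‖x‖²` has quadratic form at least `min α 1 ‖v‖²` by Cauchy–Schwarz.
For `θ = ‖x‖ ≤ C < π` we have `α θ = sinc θ / sinc (θ/2)² ≥ sinc θ ≥ sinc C > 0`, since `sinc` is
decreasing on `[0, π]` by concavity of `sin`. Differentiating `‖x₂ - x₁‖²` along the flow gives
`-2 vᵀ (L_{x₁} + L_{x₂}) v / ‖v‖` with `v = x₂ - x₁`, which is therefore at most `-4 sinc C ‖v‖`. -/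

open Matrix Real

/-- The sinc function: `sinc 0 = 1`, `sinc x = sin x / x` otherwise. -/
noncomputable def sinc (x : ℝ) : ℝ := if x = 0 then 1 else Real.sin x / x

/-- `α(θ) = sinc(θ) / sinc(θ/2)²`. -/
noncomputable def alph (θ : ℝ) : ℝ := _root_.sinc θ / (_root_.sinc (θ / 2)) ^ 2

/-- Symmetric part `L¹_x` of the transition matrix (with `L¹_0 = I`). -/
noncomputable def Lsym (x : Fin 3 → ℝ) : Matrix (Fin 3) (Fin 3) ℝ :=
  if x = 0 then 1 else
    alph (nrm x) • (1 : Matrix (Fin 3) (Fin 3) ℝ)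
      + ((1 - alph (nrm x)) / (nrm x) ^ 2) • Matrix.vecMulVec x x

/-- The attitude-kinematics transition matrix `L_x = L¹_x + hat(x)/2` (with `L_0 = I`). -/
noncomputable def Lmat (x : Fin 3 → ℝ) : Matrix (Fin 3) (Fin 3) ℝ :=
  Lsym x + (2⁻¹ : ℝ) • hat x

lemma nrm_eq_norm_toLp (p : Fin 3 → ℝ) : nrm p = ‖WithLp.toLp 2 p‖ := by
  simp [nrm, EuclideanSpace.norm_eq]

lemma nrm_sq_eq_dotProduct (p : Fin 3 → ℝ) : nrm p ^ 2 = p ⬝ᵥ p := by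
  rw [nrm, Real.sq_sqrt (by positivity)]
  simp [dotProduct, sq]

lemma nrm_nonneg (p : Fin 3 → ℝ) : 0 ≤ nrm p := Real.sqrt_nonneg _

lemma nrm_neg (p : Fin 3 → ℝ) : nrm (-p) = nrm p := by
  simp [nrm]

lemma nrm_pos {p : Fin 3 → ℝ} (hp : p ≠ 0) : 0 < nrm p := by
  simpa [nrm_eq_norm_toLp] using hp

lemma HasDerivAt.nrm_sq {f : ℝ → Fin 3 → ℝ} {f' : Fin 3 → ℝ} {t : ℝ} (hf : HasDerivAt f f' t) :
    HasDerivAt (fun s => nrm (f s) ^ 2) (2 * (f t ⬝ᵥ f')) t := by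
  have := ((EuclideanSpace.equiv (Fin 3) ℝ).symm.hasFDerivAt.comp_hasDerivAt t hf).norm_sq
  simpa [nrm_eq_norm_toLp, EuclideanSpace.inner_toLp_toLp, dotProduct_comm] using this

lemma sq_dotProduct_le {n : Type*} [Fintype n] (x v : n → ℝ) :
    (x ⬝ᵥ v) ^ 2 ≤ (x ⬝ᵥ x) * (v ⬝ᵥ v) := by
  simpa [dotProduct, sq] using Finset.sum_mul_sq_le_sq_mul_sq Finset.univ x v

lemma min_mul_dotProduct_self_le {n : Type*} [Fintype n] [DecidableEq n] (a : ℝ) (x v : n → ℝ) :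
    min a 1 * (v ⬝ᵥ v) ≤ v ⬝ᵥ ((a • 1 + ((1 - a) / (x ⬝ᵥ x)) • vecMulVec x x) *ᵥ v) := by
  have hform : v ⬝ᵥ ((a • 1 + ((1 - a) / (x ⬝ᵥ x)) • vecMulVec x x) *ᵥ v)
      = a * (v ⬝ᵥ v) + (1 - a) * ((x ⬝ᵥ v) ^ 2 / (x ⬝ᵥ x)) := by
    simp only [add_mulVec, smul_mulVec, one_mulVec, vecMulVec_mulVec, op_smul_eq_smul,
      dotProduct_add, dotProduct_smul, smul_eq_mul, dotProduct_comm v x]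
    ring
  have hv : 0 ≤ v ⬝ᵥ v := dotProduct_self_star_nonneg v
  have hproj : 0 ≤ (x ⬝ᵥ v) ^ 2 / (x ⬝ᵥ x) :=
    div_nonneg (sq_nonneg _) (dotProduct_self_star_nonneg x)
  have hcs : (x ⬝ᵥ v) ^ 2 / (x ⬝ᵥ x) ≤ v ⬝ᵥ v :=
    div_le_of_le_mul₀ (dotProduct_self_star_nonneg x) hv
      ((sq_dotProduct_le x v).trans_eq (mul_comm _ _))
  rw [hform]
  rcases le_total a 1 with ha | ha
  · rw [min_eq_left ha]
    nlinarith
  · rw [min_eq_right ha]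
    nlinarith

lemma alph_eq (θ : ℝ) : alph θ = Real.sinc θ / Real.sinc (θ / 2) ^ 2 := rfl

lemma Real.sinc_pos_of_nonneg_of_lt_pi {θ : ℝ} (h0 : 0 ≤ θ) (hθ : θ < π) : 0 < Real.sinc θ := by
  rcases h0.eq_or_lt with rfl | h0
  · simp
  · rw [Real.sinc_of_ne_zero h0.ne']
    exact div_pos (Real.sin_pos_of_pos_of_lt_pi h0 hθ) h0

-- The slope `sin θ / θ` of the chord of the concave function `sin` from `0` decreases.
lemma Real.sinc_antitoneOn : AntitoneOn Real.sinc (Set.Icc 0 π) := by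
  intro a ha b hb hab
  rcases ha.1.eq_or_lt with rfl | ha0
  · simpa using Real.sinc_le_one b
  have hsec := strictConcaveOn_sin_Icc.concaveOn.neg.secant_mono
    (Set.left_mem_Icc.2 Real.pi_pos.le) ha hb ha0.ne' (ha0.trans_le hab).ne' hab
  rw [Real.sinc_of_ne_zero ha0.ne', Real.sinc_of_ne_zero (ha0.trans_le hab).ne']
  simpa [neg_div] using hsec

lemma sinc_le_alph {θ : ℝ} (h0 : 0 ≤ θ) (hθ : θ < π) : Real.sinc θ ≤ alph θ := by
  have hhalf : 0 < Real.sinc (θ / 2) :=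
    Real.sinc_pos_of_nonneg_of_lt_pi (by positivity) (by linarith [Real.pi_pos])
  rw [alph_eq]
  exact le_div_self (Real.sinc_pos_of_nonneg_of_lt_pi h0 hθ).le (by positivity)
    (pow_le_one₀ hhalf.le (Real.sinc_le_one _))

lemma dotProduct_hat_mulVec_self (x v : Fin 3 → ℝ) : v ⬝ᵥ (hat x *ᵥ v) = 0 := by
  simp only [dotProduct, mulVec, hat, of_apply, cons_val', cons_val_fin_one, Fin.sum_univ_three,
    cons_val_zero, cons_val_one, cons_val]
  ring

lemma dotProduct_Lmat_mulVec_self (x v : Fin 3 → ℝ) :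
    v ⬝ᵥ (Lmat x *ᵥ v) = v ⬝ᵥ (Lsym x *ᵥ v) := by
  rw [Lmat, add_mulVec, dotProduct_add, smul_mulVec, dotProduct_smul,
    dotProduct_hat_mulVec_self, smul_zero, add_zero]

lemma min_alph_mul_nrm_sq_le_dotProduct_Lsym (x v : Fin 3 → ℝ) :
    min (alph (nrm x)) 1 * nrm v ^ 2 ≤ v ⬝ᵥ (Lsym x *ᵥ v) := by
  rw [nrm_sq_eq_dotProduct]
  by_cases hx : x = 0
  · rw [Lsym, if_pos hx, one_mulVec]
    exact mul_le_of_le_one_left (dotProduct_self_star_nonneg v) (min_le_right _ _)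
  · rw [Lsym, if_neg hx, nrm_sq_eq_dotProduct]
    exact min_mul_dotProduct_self_le _ x v

lemma sinc_mul_nrm_sq_le_dotProduct_Lmat {C : ℝ} (hC : C < π) {x : Fin 3 → ℝ} (hx : nrm x ≤ C)
    (v : Fin 3 → ℝ) : Real.sinc C * nrm v ^ 2 ≤ v ⬝ᵥ (Lmat x *ᵥ v) := by
  have h0 : 0 ≤ nrm x := nrm_nonneg x
  have hsinc : Real.sinc C ≤ min (alph (nrm x)) 1 :=
    le_min ((Real.sinc_antitoneOn ⟨h0, hx.trans hC.le⟩ ⟨h0.trans hx, hC.le⟩ hx).trans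
      (sinc_le_alph h0 (hx.trans_lt hC))) (Real.sinc_le_one C)
  rw [dotProduct_Lmat_mulVec_self]
  exact (mul_le_mul_of_nonneg_right hsinc (sq_nonneg _)).trans
    (min_alph_mul_nrm_sq_le_dotProduct_Lsym x v)

lemma hasDerivAt_nrm_sq_sub {x₁ x₂ : ℝ → Fin 3 → ℝ} {A B : Matrix (Fin 3) (Fin 3) ℝ} {t : ℝ}
    (h₁ : HasDerivAt x₁ (A *ᵥ ((nrm (x₂ t - x₁ t))⁻¹ • (x₂ t - x₁ t))) t)
    (h₂ : HasDerivAt x₂ (B *ᵥ ((nrm (x₁ t - x₂ t))⁻¹ • (x₁ t - x₂ t))) t) :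
    HasDerivAt (fun s => nrm (x₂ s - x₁ s) ^ 2)
      (-2 * ((x₂ t - x₁ t) ⬝ᵥ ((A + B) *ᵥ (x₂ t - x₁ t))) / nrm (x₂ t - x₁ t)) t := by
  have hswap : x₁ t - x₂ t = -(x₂ t - x₁ t) := (neg_sub _ _).symm
  rw [hswap, nrm_neg] at h₂
  convert (h₂.fun_sub h₁).nrm_sq using 1
  simp only [mulVec_smul, mulVec_neg, add_mulVec, dotProduct_sub, dotProduct_smul,
    dotProduct_neg, dotProduct_add, smul_eq_mul]
  ring

/-- Two-agent finite-time synchronization estimate: along any solution of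
`ẋ₁ = L_{x₁} (x₂-x₁)/‖x₂-x₁‖`, `ẋ₂ = L_{x₂} (x₁-x₂)/‖x₁-x₂‖` that remains in
`{‖xᵢ‖ ≤ C}` with `C < π`, the derivative of `‖x₂-x₁‖²` equals
`-2 (x₂-x₁)ᵀ(L_{x₁}+L_{x₂})(x₂-x₁)/‖x₂-x₁‖` and is at most `-2 c₁ ‖x₂-x₁‖` for
some constant `c₁ > 0` depending only on `C`. -/
theorem two_agent_disagreement_decay (C : ℝ) (hC : C < Real.pi)
    (x₁ x₂ : ℝ → Fin 3 → ℝ)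
    (hx₁ : ∀ t, x₁ t ≠ x₂ t →
      HasDerivAt x₁ (Lmat (x₁ t) *ᵥ ((nrm (x₂ t - x₁ t))⁻¹ • (x₂ t - x₁ t))) t)
    (hx₂ : ∀ t, x₁ t ≠ x₂ t →
      HasDerivAt x₂ (Lmat (x₂ t) *ᵥ ((nrm (x₁ t - x₂ t))⁻¹ • (x₁ t - x₂ t))) t)
    (hbound : ∀ t, nrm (x₁ t) ≤ C ∧ nrm (x₂ t) ≤ C) :
    ∃ c₁ > (0 : ℝ), ∀ t, x₁ t ≠ x₂ t →
      deriv (fun s => (nrm (x₂ s - x₁ s)) ^ 2) t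
          = -2 * ((x₂ t - x₁ t) ⬝ᵥ ((Lmat (x₁ t) + Lmat (x₂ t)) *ᵥ (x₂ t - x₁ t)))
              / nrm (x₂ t - x₁ t) ∧
        deriv (fun s => (nrm (x₂ s - x₁ s)) ^ 2) t ≤ -2 * c₁ * nrm (x₂ t - x₁ t) := by
  have hC0 : 0 ≤ C := (nrm_nonneg _).trans (hbound 0).1
  refine ⟨Real.sinc C, Real.sinc_pos_of_nonneg_of_lt_pi hC0 hC, fun t ht => ?_⟩
  rw [(hasDerivAt_nrm_sq_sub (hx₁ t ht) (hx₂ t ht)).deriv]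
  refine ⟨rfl, ?_⟩
  set v := x₂ t - x₁ t
  have hv : 0 < nrm v := nrm_pos (sub_ne_zero.2 ht.symm)
  have hq₁ := sinc_mul_nrm_sq_le_dotProduct_Lmat hC (hbound t).1 v
  have hq₂ := sinc_mul_nrm_sq_le_dotProduct_Lmat hC (hbound t).2 v
  have hsinc := Real.sinc_pos_of_nonneg_of_lt_pi hC0 hC
  rw [add_mulVec, dotProduct_add, div_le_iff₀ hv]
  nlinarith
end
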